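/- arXiv:1810.01583 — 9 statements merged into one kernel-verified Lean document; each statement's English description precedes it below -/
import Mathlib

section
/- Let k and d be positive integers and let 𝒟 be a nonempty finite family of k-element subsets of ℕ. Then there exist a finite simple graph G and an injective map ι from the union ⋃𝒟 into the vertex set of G such that a set S of vertices of G is a minimum distance-d-dominating set of G if and only if S is the image under ι of some member of 𝒟. -/
/-- `S` is a distance-`d`-dominating set of `G`: every vertex of `G` is within
graph distance `d` of some vertex of `S`. -/
def IsDistDomSet {V : Type*} (G : SimpleGraph V) (d : ℕ) (S : Finset V) : Prop :=
  ∀ v : V, ∃ s ∈ S, ∃ p : G.Walk s v, p.length ≤ d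

/-- `S` is a minimum distance-`d`-dominating set of `G`: a distance-`d`-dominating
set of smallest cardinality. -/
def IsMinDistDomSet {V : Type*} (G : SimpleGraph V) (d : ℕ) (S : Finset V) : Prop :=
  IsDistDomSet G d S ∧ ∀ T : Finset V, IsDistDomSet G d T → S.card ≤ T.card


/-!
Take the ground set to be a clique on `⋃ 𝒟` together with at least `k + 1` fresh vertices.
For every `k`-subset `A` of the ground set that is not in `𝒟`, attach a path of `d` new vertices
whose last vertex is joined to everything outside `A`; its first vertex, the tip, is then at
distance exactly `d` from the ground set minus `A` and farther from everything else off the path.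
A member of `𝒟` meets the complement of every such `A`, so it dominates. Conversely, if `S` has
at most `k` vertices and `T` is its part in the ground set, every `k`-set `A ⊇ T` not in `𝒟` forces
a vertex of `S` on the path of `A`. If `#T < k`, the fresh vertices yield `k - #T + 1` such sets,
too many; so `#T = k`, `S = T`, and `T ∈ 𝒟` since otherwise `T` itself forces a path vertex.
-/

open Finset

theorem SimpleGraph.Walk.apply_le_apply_add_length {V : Type*} {G : SimpleGraph V} {f : V → ℕ}
    (hf : ∀ a b, G.Adj a b → f a ≤ f b + 1) {a b : V} (p : G.Walk a b) :
    f a ≤ f b + p.length := by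
  induction p with
  | nil => simp
  | cons h _ ih =>
    have := hf _ _ h
    rw [SimpleGraph.Walk.length_cons]
    omega

theorem isMinDistDomSet_iff_mem {V : Type*} {G : SimpleGraph V} {d k : ℕ} {𝒞 : Set (Finset V)}
    (hne : 𝒞.Nonempty) (h𝒞 : ∀ S ∈ 𝒞, IsDistDomSet G d S ∧ #S = k)
    (hsmall : ∀ S, IsDistDomSet G d S → #S ≤ k → S ∈ 𝒞) (S : Finset V) :
    IsMinDistDomSet G d S ↔ S ∈ 𝒞 := by
  have hlower : ∀ T, IsDistDomSet G d T → k ≤ #T := fun T hT => by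
    by_contra! hlt
    exact hlt.ne (h𝒞 T (hsmall T hT hlt.le)).2
  obtain ⟨S₀, hS₀⟩ := hne
  constructor
  · rintro ⟨hS, hmin⟩
    exact hsmall S hS ((hmin S₀ (h𝒞 S₀ hS₀).1).trans (h𝒞 S₀ hS₀).2.le)
  · intro hS
    exact ⟨(h𝒞 S hS).1, fun T hT => (h𝒞 S hS).2 ▸ hlower T hT⟩

theorem Finset.le_card_filter_superset_not_disjoint {α : Type*} [Fintype α] [DecidableEq α]
    {k : ℕ} {T F : Finset α} (hTk : #T < k) (hFk : k < #F) :
    k - #T + 1 ≤ #{A ∈ powersetCard k univ | T ⊆ A ∧ ¬Disjoint A F} := by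
  obtain ⟨Y, hYF, hYcard⟩ := exists_subset_card_eq (s := F \ T) (n := k - #T + 1)
    (by have := le_card_sdiff T F; omega)
  have hTY : Disjoint T Y := disjoint_left.2 fun y hyT hyY => (mem_sdiff.1 (hYF hyY)).2 hyT
  have hinj : Set.InjOn (fun y => T ∪ Y.erase y) Y := by
    intro y hy y' hy' (h : T ∪ Y.erase y = T ∪ Y.erase y')
    by_contra hne
    have : y ∈ T ∪ Y.erase y' := mem_union_right _ (mem_erase.2 ⟨hne, hy⟩)
    rw [← h] at this
    simp only [mem_union, mem_erase, ne_eq, not_true_eq_false, false_and, or_false] at this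
    exact disjoint_left.1 hTY this hy
  calc k - #T + 1 = #(Y.image fun y => T ∪ Y.erase y) := by rw [card_image_of_injOn hinj, hYcard]
    _ ≤ _ := by
      refine card_le_card fun A hA => ?_
      obtain ⟨y, hy, rfl⟩ := mem_image.1 hA
      have hYy : (Y.erase y).Nonempty := by
        rw [← card_pos, card_erase_of_mem hy]; omega
      refine mem_filter.2 ⟨mem_powersetCard.2 ⟨subset_univ _, ?_⟩, subset_union_left, ?_⟩
      · rw [card_union_of_disjoint (hTY.mono_right (erase_subset _ _)), card_erase_of_mem hy]
        omega
      · obtain ⟨z, hz⟩ := hYy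
        exact not_disjoint_iff.2 ⟨z, mem_union_right _ hz,
          (mem_sdiff.1 (hYF (mem_of_mem_erase hz))).1⟩

namespace PrescribedDomination

variable {α : Type*} [Fintype α] [DecidableEq α] (𝒟 : Finset (Finset α)) (k d : ℕ)

def badSets : Finset (Finset α) := {A ∈ powersetCard k univ | A ∉ 𝒟}

abbrev Vertex := α ⊕ (badSets 𝒟 k × Fin d)

/-- The path of a bad set `A` is `(A, 0) – (A, 1) – ⋯ – (A, d - 1)`; its last vertex is joined to
every element of `α` outside `A`, and `α` is a clique. -/
def rel : Vertex 𝒟 k d → Vertex 𝒟 k d → Prop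
  | .inl _, .inl _ => True
  | .inl u, .inr (A, i) => i.val + 1 = d ∧ u ∉ A.1
  | .inr (A, i), .inr (B, j) => A = B ∧ i.val + 1 = j.val
  | .inr _, .inl _ => False

def graph : SimpleGraph (Vertex 𝒟 k d) := SimpleGraph.fromRel (rel 𝒟 k d)

/-- A lower bound for the distance to the tip `(A, 0)`. -/
def level (A : badSets 𝒟 k) : Vertex 𝒟 k d → ℕ
  | .inl u => if u ∈ A.1 then d + 1 else d
  | .inr (B, i) => if B = A then i else d + 1

variable {𝒟 k d}

theorem level_le_level_add_one (A : badSets 𝒟 k) {a b : Vertex 𝒟 k d}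
    (h : (graph 𝒟 k d).Adj a b) : level 𝒟 k d A a ≤ level 𝒟 k d A b + 1 := by
  suffices ∀ a b, rel 𝒟 k d a b →
      level 𝒟 k d A a ≤ level 𝒟 k d A b + 1 ∧ level 𝒟 k d A b ≤ level 𝒟 k d A a + 1 by
    obtain ⟨-, h | h⟩ := (SimpleGraph.fromRel_adj _ _ _).1 h
    exacts [(this a b h).1, (this b a h).2]
  rintro (u | ⟨B, i⟩) (v | ⟨C, j⟩) h <;> simp only [rel] at h <;> simp only [level]
  · split_ifs <;> omega
  · obtain ⟨hj, hv⟩ := h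
    by_cases hCA : C = A
    · subst hCA
      simp only [hv, if_true, if_false]
      omega
    · split_ifs <;> omega
  · obtain ⟨rfl, h⟩ := h
    split_ifs <;> omega

theorem exists_walk_inl_inr {u : α} {A : badSets 𝒟 k} (hu : u ∉ A.1) (i : Fin d) :
    ∃ p : (graph 𝒟 k d).Walk (.inl u) (.inr (A, i)), p.length ≤ d := by
  suffices ∀ m (i : Fin d), i.val + m + 1 = d →
      ∃ p : (graph 𝒟 k d).Walk (.inl u) (.inr (A, i)), p.length = m + 1 by
    obtain ⟨p, hp⟩ := this (d - 1 - i) i (by omega)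
    exact ⟨p, by omega⟩
  intro m
  induction m with
  | zero =>
    intro i hi
    have h : (graph 𝒟 k d).Adj (.inl u) (.inr (A, i)) :=
      (SimpleGraph.fromRel_adj _ _ _).2 ⟨Sum.inl_ne_inr, .inl ⟨by omega, hu⟩⟩
    exact ⟨h.toWalk, rfl⟩
  | succ m ih =>
    intro i hi
    obtain ⟨p, hp⟩ := ih ⟨i + 1, by omega⟩ (by simp only; omega)
    have h : (graph 𝒟 k d).Adj (.inr (A, ⟨i + 1, by omega⟩)) (.inr (A, i)) :=
      (SimpleGraph.fromRel_adj _ _ _).2 ⟨by simp [Fin.ext_iff], .inr ⟨rfl, rfl⟩⟩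
    exact ⟨p.concat h, by rw [SimpleGraph.Walk.length_concat, hp]⟩

theorem isDistDomSet_map_inl (hk : 0 < k) (hd : 0 < d) (hcard : ∀ D ∈ 𝒟, #D = k)
    {D : Finset α} (hD : D ∈ 𝒟) : IsDistDomSet (graph 𝒟 k d) d (D.map .inl) := by
  rintro (v | ⟨A, i⟩)
  · by_cases hv : v ∈ D
    · exact ⟨.inl v, mem_map_of_mem _ hv, .nil, by simp⟩
    obtain ⟨u, hu⟩ : D.Nonempty := card_pos.1 (hcard D hD ▸ hk)
    have h : (graph 𝒟 k d).Adj (.inl u) (.inl v) :=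
      (SimpleGraph.fromRel_adj _ _ _).2 ⟨by rintro ⟨⟩; exact hv hu, .inl trivial⟩
    exact ⟨.inl u, mem_map_of_mem _ hu, h.toWalk, hd⟩
  · obtain ⟨hAk, hA𝒟⟩ := mem_filter.1 A.2
    have hDA : ¬D ⊆ A := fun hDA =>
      hA𝒟 (eq_of_subset_of_card_le hDA (by rw [(mem_powersetCard.1 hAk).2, hcard D hD]) ▸ hD)
    obtain ⟨u, huD, huA⟩ := not_subset.1 hDA
    obtain ⟨p, hp⟩ := exists_walk_inl_inr huA i
    exact ⟨.inl u, mem_map_of_mem _ huD, p, hp⟩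

theorem mem_image_toRight_of_isDistDomSet (hd : 0 < d) {S : Finset (Vertex 𝒟 k d)}
    (hS : IsDistDomSet (graph 𝒟 k d) d S) {A : Finset α} (hA : A ∈ badSets 𝒟 k)
    (hSA : S.toLeft ⊆ A) : A ∈ S.toRight.image fun x => x.1.1 := by
  obtain ⟨s, hs, p, hp⟩ := hS (.inr (⟨A, hA⟩, ⟨0, hd⟩))
  have hlevel := p.apply_le_apply_add_length fun _ _ => level_le_level_add_one ⟨A, hA⟩
  rcases s with u | ⟨B, i⟩
  · simp only [level, hSA (mem_toLeft.2 hs), ↓reduceIte] at hlevel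
    omega
  · by_cases hB : B = ⟨A, hA⟩
    · exact mem_image.2 ⟨(B, i), mem_toRight.2 hs, by simp [hB]⟩
    · simp only [level, hB, ↓reduceIte] at hlevel
      omega

theorem exists_mem_eq_map_inl_of_isDistDomSet (hd : 0 < d) {F : Finset α}
    (hF : ∀ D ∈ 𝒟, Disjoint D F) (hFk : k < #F) {S : Finset (Vertex 𝒟 k d)}
    (hS : IsDistDomSet (graph 𝒟 k d) d S) (hSk : #S ≤ k) : ∃ D ∈ 𝒟, S = D.map .inl := by
  set T := S.toLeft
  have hsplit : #T + #S.toRight = #S := card_toLeft_add_card_toRight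
  have hT : #T = k := by
    by_contra hne
    have hcount := le_card_filter_superset_not_disjoint (T := T) (by omega) hFk
    have hforced : #{A ∈ powersetCard k univ | T ⊆ A ∧ ¬Disjoint A F} ≤ #S.toRight := by
      refine (card_le_card fun A hA => ?_).trans (card_image_le (f := fun x => x.1.1))
      obtain ⟨hAk, hTA, hAF⟩ := mem_filter.1 hA
      exact mem_image_toRight_of_isDistDomSet hd hS
        (mem_filter.2 ⟨hAk, fun hA𝒟 => hAF (hF A hA𝒟)⟩) hTA
    omega
  have hR : S.toRight = ∅ := card_eq_zero.1 (by omega)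
  have hT𝒟 : T ∈ 𝒟 := by
    by_contra hT𝒟
    have := mem_image_toRight_of_isDistDomSet hd hS
      (mem_filter.2 ⟨mem_powersetCard.2 ⟨subset_univ _, hT⟩, hT𝒟⟩) subset_rfl
    simp [hR] at this
  exact ⟨T, hT𝒟, by rw [← disjSum_empty, eq_disjSum_iff]; exact ⟨rfl, hR⟩⟩

theorem isMinDistDomSet_graph_iff (hk : 0 < k) (hd : 0 < d) (hcard : ∀ D ∈ 𝒟, #D = k)
    (h𝒟 : 𝒟.Nonempty) {F : Finset α} (hF : ∀ D ∈ 𝒟, Disjoint D F) (hFk : k < #F)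
    (S : Finset (Vertex 𝒟 k d)) :
    IsMinDistDomSet (graph 𝒟 k d) d S ↔ ∃ D ∈ 𝒟, S = D.map .inl := by
  refine isMinDistDomSet_iff_mem (𝒞 := {S | ∃ D ∈ 𝒟, S = D.map .inl}) ?_ ?_
    (fun S hS hSk => exists_mem_eq_map_inl_of_isDistDomSet hd hF hFk hS hSk) S
  · obtain ⟨D, hD⟩ := h𝒟
    exact ⟨_, D, hD, rfl⟩
  · rintro _ ⟨D, hD, rfl⟩
    exact ⟨isDistDomSet_map_inl hk hd hcard hD, by rw [card_map, hcard D hD]⟩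

end PrescribedDomination

theorem exists_fin_injOn_with_spare (s : Finset ℕ) (m : ℕ) :
    ∃ (N : ℕ) (ι : ℕ → Fin N) (F : Finset (Fin N)),
      Set.InjOn ι s ∧ (∀ D ⊆ s, Disjoint (D.image ι) F) ∧ m < #F := by
  obtain ⟨M, hM⟩ := s.exists_nat_subset_range
  have hval : ∀ n ∈ s, (Fin.ofNat (M + m + 1) n : ℕ) = n := fun n hn =>
    Nat.mod_eq_of_lt (by have := mem_range.1 (hM hn); omega)
  have hMval : (Fin.ofNat (M + m + 1) M : ℕ) = M := Nat.mod_eq_of_lt (by omega)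
  refine ⟨M + m + 1, Fin.ofNat _, Ici (Fin.ofNat _ M),
    fun a ha b hb h => by rw [← hval a ha, ← hval b hb, h], fun D hD => ?_, ?_⟩
  · refine disjoint_left.2 fun x hx hxM => ?_
    obtain ⟨n, hn, rfl⟩ := mem_image.1 hx
    rw [mem_Ici, Fin.le_def, hMval, hval n (hD hn)] at hxM
    have := mem_range.1 (hM (hD hn))
    omega
  · rw [Fin.card_Ici, hMval]
    omega

/-- Let `k` and `d` be positive integers and let `𝒟` be a nonempty finite family of
`k`-element subsets of `ℕ`. Then there exist a finite simple graph `G` and an injective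
map `ι` from the union `⋃ 𝒟` into the vertex set of `G` such that a set `S` of vertices
of `G` is a minimum distance-`d`-dominating set of `G` if and only if `S` is the image
under `ι` of some member of `𝒟`. -/
theorem exists_graph_with_prescribed_min_dist_dom_sets
    (k d : ℕ) (hk : 0 < k) (hd : 0 < d)
    (𝒟 : Finset (Finset ℕ)) (h𝒟 : 𝒟.Nonempty) (hcard : ∀ D ∈ 𝒟, D.card = k) :
    ∃ (V : Type) (_ : Fintype V) (_ : DecidableEq V) (G : SimpleGraph V) (ι : ℕ → V),
      Set.InjOn ι ↑(𝒟.sup id) ∧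
      ∀ S : Finset V, IsMinDistDomSet G d S ↔ ∃ D ∈ 𝒟, S = D.image ι := by
  obtain ⟨N, ι, F, hι, hF, hFk⟩ := exists_fin_injOn_with_spare (𝒟.sup id) k
  have hsub : ∀ D ∈ 𝒟, D ⊆ 𝒟.sup id := fun D hD => le_sup (f := id) hD
  refine ⟨_, inferInstance, inferInstance, PrescribedDomination.graph (𝒟.image (image ι)) k d,
    Sum.inl ∘ ι, Sum.inl_injective.comp_injOn hι, fun S => ?_⟩
  rw [PrescribedDomination.isMinDistDomSet_graph_iff hk hd ?_ (h𝒟.image _) (F := F) ?_ hFk]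
  · simp only [exists_mem_image, map_eq_image, image_image]
    rfl
  · simp only [forall_mem_image]
    intro D hD
    rw [card_image_of_injOn (hι.mono (coe_subset.2 (hsub D hD))), hcard D hD]
  · simp only [forall_mem_image]
    exact fun D hD => hF D (hsub D hD)
end

section
/- The wheel graph W_4 is labellable, and for every odd integer n ≥ 5 the wheel graph W_n is labellable. -/
/-- `H` is labellable: for some positive integer `k` the vertices of `H` can be
injectively labelled by `k`-element subsets of `ℕ` so that two distinct vertices
are adjacent if and only if their labels intersect in a set of size `k - 1`. -/
def Labellable {V : Type*} (H : SimpleGraph V) : Prop :=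
  ∃ k : ℕ, 0 < k ∧ ∃ ℓ : V → Finset ℕ, Function.Injective ℓ ∧
    (∀ v, (ℓ v).card = k) ∧
    ∀ u v : V, u ≠ v → (H.Adj u v ↔ (ℓ u ∩ ℓ v).card = k - 1)

/-- The wheel graph `W n` on `n` vertices: a hub vertex (`none`) joined to every
vertex of a cycle on `n - 1` vertices (the vertices `some i` for `i : Fin (n-1)`,
consecutive ones being adjacent cyclically). -/
def wheelGraph (n : ℕ) : SimpleGraph (Option (Fin (n - 1))) :=
  SimpleGraph.fromRel (fun a b =>
    a = none ∨ b = none ∨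
      ∃ i j : Fin (n - 1), a = some i ∧ b = some j ∧ (i.val + 1) % (n - 1) = j.val)

/-!
`W_4` is the complete graph `K_4`, labelled by singletons. For `n = 2t + 1`, the wheel `W_n` is an
induced subgraph of the cone over the rook's graph `K_t □ K_ℕ`: vertex `i` of the rim `C_{2t}` goes
to the square `(⌊i/2⌋, ⌊((i + 1) mod 2t)/2⌋)`, so that the rim edges `{2a, 2a+1}` lie in a row and
the rim edges `{2a+1, 2a+2}` in a column. That cone is labellable with `k = t`: the apex gets
`{0, …, t-1}` and the square `(a, x)` gets `{0, …, t-1}` with `a` replaced by `t + x`.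
-/

open Finset SimpleGraph

theorem Labellable.of_embedding {V W : Type*} {G : SimpleGraph V} {H : SimpleGraph W}
    (f : G ↪g H) (hH : Labellable H) : Labellable G := by
  obtain ⟨k, hk, ℓ, hinj, hcard, hadj⟩ := hH
  refine ⟨k, hk, ℓ ∘ f, hinj.comp f.injective, fun v => hcard (f v), fun u v huv => ?_⟩
  rw [← f.map_adj_iff]
  exact hadj _ _ (f.injective.ne huv)

theorem labellable_top (V : Type*) [Countable V] : Labellable (⊤ : SimpleGraph V) := by
  obtain ⟨e, he⟩ := Countable.exists_injective_nat V
  refine ⟨1, one_pos, fun v => {e v}, fun u v h => he (singleton_injective h),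
    fun v => card_singleton _, fun u v huv => ?_⟩
  simp [he.ne huv, huv]

namespace SimpleGraph

variable {V : Type*} (G : SimpleGraph V)

def cone : SimpleGraph (Option V) where
  Adj
    | none, none => False
    | some a, some b => G.Adj a b
    | _, _ => True
  symm := ⟨by rintro (_ | a) (_ | b) h <;> first | exact h | exact G.adj_symm (h : G.Adj a b)⟩
  loopless := ⟨by rintro (_ | a) h; exacts [h, G.loopless.irrefl a h]⟩

@[simp] lemma cone_adj_none_some (a : V) : G.cone.Adj none (some a) := trivial

@[simp] lemma cone_adj_some_none (a : V) : G.cone.Adj (some a) none := trivial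

@[simp] lemma cone_adj_some_some (a b : V) : G.cone.Adj (some a) (some b) ↔ G.Adj a b := Iff.rfl

end SimpleGraph

def rookLabel (t a x : ℕ) : Finset ℕ := insert (t + x) ((range t).erase a)

section rookLabel

variable {t a a' : ℕ} (x x' : ℕ)

lemma card_rookLabel (ha : a < t) : #(rookLabel t a x) = t := by
  rw [rookLabel, card_insert_of_notMem (by simp), card_erase_of_mem (mem_range.2 ha),
    card_range]
  omega

lemma range_inter_rookLabel : range t ∩ rookLabel t a x = (range t).erase a := by
  ext z
  simp only [rookLabel, mem_inter, mem_insert, mem_erase, mem_range]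
  omega

lemma card_rookLabel_inter (ha : a < t) (ha' : a' < t) :
    #(rookLabel t a x ∩ rookLabel t a' x') + (if a = a' then 1 else 2) =
      t + if x = x' then 1 else 0 := by
  have hinter : rookLabel t a x ∩ rookLabel t a' x' =
      (if x = x' then {t + x} else ∅) ∪ (range t \ {a, a'}) := by
    ext z
    simp only [rookLabel, mem_inter, mem_insert, mem_erase, mem_range, mem_union, mem_sdiff]
    split_ifs <;> simp <;> omega
  have hdisj : Disjoint (if x = x' then {t + x} else ∅) (range t \ {a, a'}) := by
    split_ifs <;> simp
  have hpair : #({a, a'} : Finset ℕ) = if a = a' then 1 else 2 := by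
    split_ifs with h <;> simp [h]
  have hsub : ({a, a'} : Finset ℕ) ⊆ range t := by
    simp [insert_subset_iff, ha, ha']
  have hle := card_le_card hsub
  rw [card_range, hpair] at hle
  rw [hinter, card_union_of_disjoint hdisj, card_sdiff_of_subset hsub, card_range, hpair]
  split_ifs <;> simp <;> omega

lemma rookLabel_ne_range : rookLabel t a x ≠ range t := fun h => by
  have hmem := mem_insert_self (t + x) ((range t).erase a)
  rw [← rookLabel, h, mem_range] at hmem
  omega

lemma rookLabel_inj (ha : a < t) (ha' : a' < t) :
    rookLabel t a x = rookLabel t a' x' ↔ a = a' ∧ x = x' := by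
  refine ⟨fun h => ?_, fun ⟨ha, hx⟩ => ha ▸ hx ▸ rfl⟩
  have hcard := card_rookLabel_inter x x' ha ha'
  rw [h, inter_self, card_rookLabel x' ha'] at hcard
  split_ifs at hcard <;> omega

end rookLabel

theorem labellable_cone_rookGraph (t : ℕ) (ht : 0 < t) :
    Labellable (completeGraph (Fin t) □ completeGraph ℕ).cone := by
  refine ⟨t, ht, fun v => v.elim (range t) fun p => rookLabel t p.1 p.2, ?_, ?_, ?_⟩
  · rintro (_ | ⟨a, x⟩) (_ | ⟨a', x'⟩) h
    · rfl
    · exact absurd h.symm (rookLabel_ne_range x')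
    · exact absurd h (rookLabel_ne_range x)
    · obtain ⟨ha, rfl⟩ := (rookLabel_inj x x' a.2 a'.2).1 h
      rw [Fin.val_inj.1 ha]
  · rintro (_ | ⟨a, x⟩)
    exacts [card_range t, card_rookLabel x a.2]
  · rintro (_ | ⟨a, x⟩) (_ | ⟨a', x'⟩) hne
    · exact absurd rfl hne
    · simp [range_inter_rookLabel, a'.2]
    · simp [inter_comm (rookLabel _ _ _), range_inter_rookLabel, a.2]
    · have hcard := card_rookLabel_inter x x' a.2 a'.2
      simp only [ne_eq, Option.some.injEq, Prod.mk.injEq, ← Fin.val_inj] at hne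
      simp only [Option.elim_some, cone_adj_some_some, boxProd_adj, completeGraph, top_adj,
        ← Fin.val_inj]
      split_ifs at hcard <;> omega

section wheelGraph

variable {n : ℕ}

lemma wheelGraph_adj_none_some (i : Fin (n - 1)) : (wheelGraph n).Adj none (some i) := by
  simp [wheelGraph]

lemma wheelGraph_adj_some_none (i : Fin (n - 1)) : (wheelGraph n).Adj (some i) none :=
  (wheelGraph_adj_none_some i).symm

lemma wheelGraph_adj_some_some (i j : Fin (n - 1)) :
    (wheelGraph n).Adj (some i) (some j) ↔
      i ≠ j ∧ ((i.val + 1) % (n - 1) = j.val ∨ (j.val + 1) % (n - 1) = i.val) := by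
  simp [wheelGraph]

end wheelGraph

lemma wheelGraph_four_eq_top : wheelGraph 4 = ⊤ := by
  ext u v
  simp only [wheelGraph, fromRel_adj, top_adj]
  revert u v
  decide

lemma succ_mod_eq_ite {i m : ℕ} (hi : i < m) : (i + 1) % m = if i + 1 = m then 0 else i + 1 := by
  split_ifs with h
  · rw [h, Nat.mod_self]
  · exact Nat.mod_eq_of_lt (by omega)

section evenCycle

variable {t i j : ℕ}

lemma eq_of_div_two_eq_of_succ_mod_div_two_eq (ht : 2 ≤ t) (hi : i < 2 * t) (hj : j < 2 * t)
    (h₁ : i / 2 = j / 2) (h₂ : (i + 1) % (2 * t) / 2 = (j + 1) % (2 * t) / 2) : i = j := by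
  rw [succ_mod_eq_ite hi, succ_mod_eq_ite hj] at h₂
  split_ifs at h₂ <;> omega

lemma evenCycle_adj_iff (ht : 2 ≤ t) (hi : i < 2 * t) (hj : j < 2 * t) :
    (i ≠ j ∧ ((i + 1) % (2 * t) = j ∨ (j + 1) % (2 * t) = i)) ↔
      (i / 2 ≠ j / 2 ∧ (i + 1) % (2 * t) / 2 = (j + 1) % (2 * t) / 2 ∨
        (i + 1) % (2 * t) / 2 ≠ (j + 1) % (2 * t) / 2 ∧ i / 2 = j / 2) := by
  rw [succ_mod_eq_ite hi, succ_mod_eq_ite hj]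
  split_ifs <;> omega

end evenCycle

def wheelEmbeddingConeRookGraph (t : ℕ) (ht : 2 ≤ t) :
    wheelGraph (2 * t + 1) ↪g (completeGraph (Fin t) □ completeGraph ℕ).cone where
  toFun := Option.map fun i => (⟨i / 2, by omega⟩, (i + 1) % (2 * t) / 2)
  inj' := by
    refine Option.map_injective fun i j h => Fin.ext ?_
    simp only [Prod.mk.injEq, Fin.mk.injEq] at h
    exact eq_of_div_two_eq_of_succ_mod_div_two_eq ht i.2 j.2 h.1 h.2
  map_rel_iff' := by
    rintro (_ | i) (_ | j)
    · simp
    · exact iff_of_true trivial (wheelGraph_adj_none_some _)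
    · exact iff_of_true trivial (wheelGraph_adj_some_none _)
    · simp only [Function.Embedding.coeFn_mk, Option.map_some, cone_adj_some_some, boxProd_adj,
        completeGraph, top_adj, ne_eq, wheelGraph_adj_some_some, Fin.ext_iff]
      exact (evenCycle_adj_iff ht i.2 j.2).symm

/-- The wheel graph `W_4` is labellable, and for every odd integer `n ≥ 5`
the wheel graph `W_n` is labellable. -/
theorem wheel_labellable :
    Labellable (wheelGraph 4) ∧
      ∀ n : ℕ, 5 ≤ n → Odd n → Labellable (wheelGraph n) := by
  refine ⟨wheelGraph_four_eq_top ▸ labellable_top _, ?_⟩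
  rintro n hn ⟨t, rfl⟩
  exact (labellable_cone_rookGraph t (by omega)).of_embedding
    (wheelEmbeddingConeRookGraph t (by omega))
end

section
/- The fan graphs F_{2,2} and F_{2,3} are labellable; for every positive integer m the fan graph F_{m,1} is labellable; and for every positive integer n the fan graph F_{1,n} is labellable. -/
/-- The fan graph `F_{m,n}`: `m` vertices (`Sum.inl`), each joined to every vertex
of a path on `n` vertices (`Sum.inr`, consecutive ones adjacent), with the `m`
vertices pairwise nonadjacent. -/
def fanGraph (m n : ℕ) : SimpleGraph (Fin m ⊕ Fin n) :=
  SimpleGraph.fromRel (fun a b =>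
    (∃ i j, a = Sum.inl i ∧ b = Sum.inr j) ∨
    (∃ i j : Fin n, a = Sum.inr i ∧ b = Sum.inr j ∧ i.val + 1 = j.val))

/-!
For `a < N ≤ x` put `S(a, x) = (range N \ {a}) ∪ {x}`, an `N`-set. Two distinct such sets meet in
`N - 1` elements exactly when they share `a` or `x`, and `range N` meets each of them in `N - 1`
elements; so every induced subgraph of the cone over a rook's graph is labellable. The star
`F_{m,1}` sits on a diagonal of the rook's graph, and the path of `F_{1,n}` on the staircase
`i ↦ (⌊i/2⌋, ⌊(i+1)/2⌋)`. The fans `F_{2,n}` with `n ≤ 3` are labelled by `2`-sets: the path by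
`{j, j+1}` and the two other vertices by `{0, 2}` and `{1, 3}`.
-/

open Finset

section ReplaceInRange

def replaceInRange (N a x : ℕ) : Finset ℕ := insert x ((range N).erase a)

variable {N a b x y : ℕ}

lemma card_replaceInRange (ha : a < N) (hx : N ≤ x) : #(replaceInRange N a x) = N := by
  rw [replaceInRange, card_insert_of_notMem (by simp; omega), card_erase_of_mem (by simpa),
    card_range]
  omega

lemma replaceInRange_inter_range (hx : N ≤ x) :
    replaceInRange N a x ∩ range N = (range N).erase a := by
  ext z
  simp only [replaceInRange, mem_inter, mem_insert, mem_erase, mem_range]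
  omega

lemma card_replaceInRange_inter_range (ha : a < N) (hx : N ≤ x) :
    #(replaceInRange N a x ∩ range N) = N - 1 := by
  rw [replaceInRange_inter_range hx, card_erase_of_mem (by simpa), card_range]

lemma replaceInRange_inter_replaceInRange (hx : N ≤ x) (hy : N ≤ y) :
    replaceInRange N a x ∩ replaceInRange N b y
      = ((range N).erase a).erase b ∪ (if x = y then {x} else ∅) := by
  ext z
  simp only [replaceInRange, mem_inter, mem_insert, mem_erase, mem_range, mem_union]
  split_ifs <;> simp <;> omega

lemma card_replaceInRange_inter_replaceInRange (ha : a < N) (hb : b < N) (hx : N ≤ x)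
    (hy : N ≤ y) :
    #(replaceInRange N a x ∩ replaceInRange N b y) + (if a = b then 1 else 2)
      = N + (if x = y then 1 else 0) := by
  have hdisj : Disjoint (((range N).erase a).erase b) (if x = y then {x} else ∅) := by
    split_ifs
    · simp only [disjoint_singleton_right, mem_erase, mem_range]
      omega
    · exact disjoint_empty_right _
  have herase : #(((range N).erase a).erase b) + (if a = b then 1 else 2) = N := by
    split_ifs with hab
    · subst hab
      rw [erase_idem, card_erase_of_mem (by simpa), card_range]
      omega
    · rw [card_erase_of_mem (mem_erase.2 ⟨Ne.symm hab, by simpa⟩), card_erase_of_mem (by simpa),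
        card_range]
      omega
  rw [replaceInRange_inter_replaceInRange hx hy, card_union_of_disjoint hdisj]
  split_ifs at herase ⊢ <;> simp only [card_singleton, card_empty] <;> omega

lemma replaceInRange_inj (ha : a < N) (hb : b < N) (hx : N ≤ x) (hy : N ≤ y) :
    replaceInRange N a x = replaceInRange N b y ↔ a = b ∧ x = y := by
  refine ⟨fun h => ?_, fun ⟨hab, hxy⟩ => hab ▸ hxy ▸ rfl⟩
  have hcard := card_replaceInRange_inter_replaceInRange ha hb hx hy
  rw [← h, inter_self, card_replaceInRange ha hx] at hcard
  split_ifs at hcard with hab hxy <;> first | exact ⟨hab, hxy⟩ | omega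

lemma replaceInRange_ne_range (hx : N ≤ x) : replaceInRange N a x ≠ range N := by
  intro h
  have hmem : x ∈ replaceInRange N a x := mem_insert_self x _
  rw [h, mem_range] at hmem
  omega

lemma card_replaceInRange_inter_replaceInRange_eq_iff (ha : a < N) (hb : b < N) (hx : N ≤ x)
    (hy : N ≤ y) (hne : (a, x) ≠ (b, y)) :
    #(replaceInRange N a x ∩ replaceInRange N b y) = N - 1 ↔ a = b ∨ x = y := by
  have hcard := card_replaceInRange_inter_replaceInRange ha hb hx hy
  rw [Ne, Prod.mk.injEq] at hne
  split_ifs at hcard <;> omega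

end ReplaceInRange

theorem labellable_of_rookCone {V : Type*} (H : SimpleGraph V) (N : ℕ) (hN : 0 < N) (apex : V)
    (row col : V → ℕ) (hrow : ∀ v ≠ apex, row v < N) (hcol : ∀ v ≠ apex, N ≤ col v)
    (hinj : ∀ u ≠ apex, ∀ v ≠ apex, row u = row v → col u = col v → u = v)
    (hapex : ∀ v ≠ apex, H.Adj apex v)
    (hadj : ∀ u ≠ apex, ∀ v ≠ apex, u ≠ v → (H.Adj u v ↔ row u = row v ∨ col u = col v)) :
    Labellable H := by
  classical
  let ℓ v := if v = apex then range N else replaceInRange N (row v) (col v)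
  refine ⟨N, hN, ℓ, ?_, ?_, ?_⟩
  · intro u v h
    by_cases hu : u = apex <;> by_cases hv : v = apex <;>
      simp only [ℓ, hu, hv, if_true, if_false] at h
    · rw [hu, hv]
    · exact absurd h.symm (replaceInRange_ne_range (hcol v hv))
    · exact absurd h (replaceInRange_ne_range (hcol u hu))
    · obtain ⟨hr, hc⟩ := (replaceInRange_inj (hrow u hu) (hrow v hv) (hcol u hu) (hcol v hv)).1 h
      exact hinj u hu v hv hr hc
  · intro v
    by_cases hv : v = apex
    · simp [ℓ, hv]
    · simp only [ℓ, hv, if_false]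
      exact card_replaceInRange (hrow v hv) (hcol v hv)
  · intro u v huv
    by_cases hu : u = apex <;> by_cases hv : v = apex
    · exact absurd (hu.trans hv.symm) huv
    · subst hu
      simp only [ℓ, hv, if_true, if_false, inter_comm (range N)]
      exact iff_of_true (hapex v hv) (card_replaceInRange_inter_range (hrow v hv) (hcol v hv))
    · subst hv
      simp only [ℓ, hu, if_true, if_false]
      exact iff_of_true (hapex u hu).symm
        (card_replaceInRange_inter_range (hrow u hu) (hcol u hu))
    · have hne : (row u, col u) ≠ (row v, col v) := fun h =>
        huv (hinj u hu v hv (congrArg Prod.fst h) (congrArg Prod.snd h))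
      simp only [ℓ, hu, hv, if_false]
      rw [hadj u hu v hv huv, card_replaceInRange_inter_replaceInRange_eq_iff (hrow u hu)
        (hrow v hv) (hcol u hu) (hcol v hv) hne]

namespace fanGraph

variable {m n : ℕ}

@[simp] lemma not_adj_inl_inl (i j : Fin m) : ¬ (fanGraph m n).Adj (.inl i) (.inl j) := by
  simp [fanGraph]

@[simp] lemma adj_inl_inr (i : Fin m) (j : Fin n) : (fanGraph m n).Adj (.inl i) (.inr j) := by
  simp [fanGraph]

@[simp] lemma adj_inr_inl (i : Fin n) (j : Fin m) : (fanGraph m n).Adj (.inr i) (.inl j) := by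
  simp [fanGraph]

@[simp] lemma adj_inr_inr (i j : Fin n) :
    (fanGraph m n).Adj (.inr i) (.inr j) ↔ i.val + 1 = j.val ∨ j.val + 1 = i.val := by
  simp only [fanGraph, SimpleGraph.fromRel_adj, ne_eq, Sum.inr.injEq, reduceCtorEq, false_and,
    exists_false, false_or, exists_and_left, exists_eq_left']
  rw [and_iff_right_iff_imp, ← Fin.val_inj]
  omega

instance : DecidableRel (fanGraph m n).Adj
  | .inl _, .inl _ => .isFalse (not_adj_inl_inl _ _)
  | .inl _, .inr _ => .isTrue (adj_inl_inr _ _)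
  | .inr _, .inl _ => .isTrue (adj_inr_inl _ _)
  | .inr i, .inr j => decidable_of_iff' _ (adj_inr_inr i j)

end fanGraph

def twoFanLabel (n : ℕ) : Fin 2 ⊕ Fin n → Finset ℕ :=
  Sum.elim ![{0, 2}, {1, 3}] fun j => {j.val, j.val + 1}

theorem labellable_fanGraph_two_of_le (n : ℕ) (hn : n ≤ 3) : Labellable (fanGraph 2 n) := by
  refine ⟨2, two_pos, twoFanLabel n, ?_⟩
  interval_cases n <;> decide

theorem labellable_fanGraph_one_right (m : ℕ) (hm : 0 < m) : Labellable (fanGraph m 1) := by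
  have leaf : ∀ v ≠ (.inr 0 : Fin m ⊕ Fin 1), ∃ i, v = .inl i := by
    rintro (i | i) hv
    · exact ⟨i, rfl⟩
    · exact absurd (congrArg Sum.inr (Subsingleton.elim i 0)) hv
  refine labellable_of_rookCone _ m hm (.inr 0) (Sum.elim (·.val) 0) (Sum.elim (m + ·.val) 0)
    ?_ ?_ ?_ ?_ ?_
  · intro v hv
    obtain ⟨i, rfl⟩ := leaf v hv
    exact i.isLt
  · intro v hv
    obtain ⟨i, rfl⟩ := leaf v hv
    exact Nat.le_add_right m i
  · intro u hu v hv
    obtain ⟨i, rfl⟩ := leaf u hu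
    obtain ⟨j, rfl⟩ := leaf v hv
    simp [Fin.val_inj]
  · intro v hv
    obtain ⟨i, rfl⟩ := leaf v hv
    exact fanGraph.adj_inr_inl 0 i
  · intro u hu v hv huv
    obtain ⟨i, rfl⟩ := leaf u hu
    obtain ⟨j, rfl⟩ := leaf v hv
    simpa [Fin.val_inj] using huv

theorem labellable_fanGraph_one_left (n : ℕ) : Labellable (fanGraph 1 n) := by
  have pathVertex : ∀ v ≠ (.inl 0 : Fin 1 ⊕ Fin n), ∃ i, v = .inr i := by
    rintro (i | i) hv
    · exact absurd (congrArg Sum.inl (Subsingleton.elim i 0)) hv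
    · exact ⟨i, rfl⟩
  refine labellable_of_rookCone _ (n + 1) n.succ_pos (.inl 0) (Sum.elim 0 (·.val / 2))
    (Sum.elim 0 fun i => n + 1 + (i.val + 1) / 2) ?_ ?_ ?_ ?_ ?_
  · intro v hv
    obtain ⟨i, rfl⟩ := pathVertex v hv
    simp only [Sum.elim_inr]
    omega
  · intro v hv
    obtain ⟨i, rfl⟩ := pathVertex v hv
    exact Nat.le_add_right _ _
  · intro u hu v hv hrow hcol
    obtain ⟨i, rfl⟩ := pathVertex u hu
    obtain ⟨j, rfl⟩ := pathVertex v hv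
    simp only [Sum.elim_inr] at hrow hcol
    exact congrArg Sum.inr (Fin.ext (by omega))
  · intro v hv
    obtain ⟨i, rfl⟩ := pathVertex v hv
    exact fanGraph.adj_inl_inr 0 i
  · intro u hu v hv huv
    obtain ⟨i, rfl⟩ := pathVertex u hu
    obtain ⟨j, rfl⟩ := pathVertex v hv
    have hij : i.val ≠ j.val := fun h => huv (congrArg Sum.inr (Fin.ext h))
    simp only [fanGraph.adj_inr_inr, Sum.elim_inr]
    omega

/-- The fan graphs `F_{2,2}` and `F_{2,3}` are labellable; for every positive
integer `m` the fan graph `F_{m,1}` is labellable; and for every positive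
integer `n` the fan graph `F_{1,n}` is labellable. -/
theorem fan_labellable :
    Labellable (fanGraph 2 2) ∧ Labellable (fanGraph 2 3) ∧
      (∀ m : ℕ, 0 < m → Labellable (fanGraph m 1)) ∧
      (∀ n : ℕ, 0 < n → Labellable (fanGraph 1 n)) :=
  ⟨labellable_fanGraph_two_of_le 2 (by norm_num), labellable_fanGraph_two_of_le 3 le_rfl,
    labellable_fanGraph_one_right, fun n _ => labellable_fanGraph_one_left n⟩
end

section
/- If G and H are labellable finite simple graphs, then their Cartesian (box) product G □ H is labellable. -/
open Finset Function

structure SimpleGraph.IsLabelling {V α : Type*} [DecidableEq α] (G : SimpleGraph V) (k : ℕ)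
    (ℓ : V → Finset α) : Prop where
  injective : Injective ℓ
  card_eq : ∀ v, #(ℓ v) = k
  adj_iff : ∀ u v, u ≠ v → (G.Adj u v ↔ #(ℓ u ∩ ℓ v) = k - 1)

theorem SimpleGraph.labellable_iff {V : Type*} (G : SimpleGraph V) :
    Labellable G ↔ ∃ k, 0 < k ∧ ∃ ℓ : V → Finset ℕ, G.IsLabelling k ℓ :=
  ⟨fun ⟨k, hk, ℓ, hinj, hcard, hadj⟩ => ⟨k, hk, ℓ, ⟨hinj, hcard, hadj⟩⟩,
    fun ⟨k, hk, ℓ, hℓ⟩ => ⟨k, hk, ℓ, hℓ.injective, hℓ.card_eq, hℓ.adj_iff⟩⟩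

theorem Finset.disjSum_inter_disjSum {α β : Type*} [DecidableEq α] [DecidableEq β]
    (s₁ s₂ : Finset α) (t₁ t₂ : Finset β) :
    s₁.disjSum t₁ ∩ s₂.disjSum t₂ = (s₁ ∩ s₂).disjSum (t₁ ∩ t₂) := by
  ext (x | x) <;> simp

namespace SimpleGraph.IsLabelling

variable {V W α β : Type*} {G : SimpleGraph V} {H : SimpleGraph W} {k m : ℕ}

theorem card_inter_le [DecidableEq α] {ℓ : V → Finset α} (hℓ : G.IsLabelling k ℓ) (u v : V) :
    #(ℓ u ∩ ℓ v) ≤ k :=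
  hℓ.card_eq v ▸ card_le_card inter_subset_right

theorem card_inter_eq_iff [DecidableEq α] {ℓ : V → Finset α} (hℓ : G.IsLabelling k ℓ)
    (u v : V) : #(ℓ u ∩ ℓ v) = k ↔ u = v := by
  refine ⟨fun h => hℓ.injective ?_, fun h => by rw [h, inter_self, hℓ.card_eq]⟩
  have huv : ℓ u ⊆ ℓ v :=
    inter_eq_left.1 (eq_of_subset_of_card_le inter_subset_left (by rw [h, hℓ.card_eq]))
  exact eq_of_subset_of_card_le huv (by rw [hℓ.card_eq, hℓ.card_eq])

theorem map [DecidableEq α] [DecidableEq β] {ℓ : V → Finset α} (hℓ : G.IsLabelling k ℓ)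
    (e : α ↪ β) : G.IsLabelling k (fun v => (ℓ v).map e) where
  injective := (Finset.map_injective e).comp hℓ.injective
  card_eq v := by rw [card_map, hℓ.card_eq]
  adj_iff u v huv := by rw [← map_inter, card_map, hℓ.adj_iff u v huv]

theorem boxProd [DecidableEq α] [DecidableEq β] {ℓ : V → Finset α} {ℓ' : W → Finset β}
    (hℓ : G.IsLabelling k ℓ) (hℓ' : H.IsLabelling m ℓ') :
    (G □ H).IsLabelling (k + m) (fun p => (ℓ p.1).disjSum (ℓ' p.2)) where
  injective _ _ h :=
    Prod.ext (hℓ.injective (disjSum_inj.1 h).1) (hℓ'.injective (disjSum_inj.1 h).2)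
  card_eq p := by rw [card_disjSum, hℓ.card_eq, hℓ'.card_eq]
  adj_iff := by
    rintro ⟨v, w⟩ ⟨v', w'⟩ hne
    simp only [boxProd_adj, disjSum_inter_disjSum, card_disjSum]
    have hv_le := hℓ.card_inter_le v v'
    have hw_le := hℓ'.card_inter_le w w'
    rcases eq_or_ne v v' with rfl | hv
    · have hw : w ≠ w' := fun hw => hne (hw ▸ rfl)
      have := (hℓ'.card_inter_eq_iff w w').not.2 hw
      simp only [G.loopless.irrefl, false_and, and_true, false_or, inter_self, hℓ.card_eq,
        hℓ'.adj_iff _ _ hw]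
      omega
    have := (hℓ.card_inter_eq_iff v v').not.2 hv
    rcases eq_or_ne w w' with rfl | hw
    · simp only [H.loopless.irrefl, false_and, and_true, or_false, inter_self, hℓ'.card_eq,
        hℓ.adj_iff _ _ hv]
      omega
    have := (hℓ'.card_inter_eq_iff w w').not.2 hw
    simp only [hv, hw, and_false, or_false, false_iff]
    omega

end SimpleGraph.IsLabelling

theorem boxProd_labellable_general {V W : Type*}
    (G : SimpleGraph V) (H : SimpleGraph W)
    (hG : Labellable G) (hH : Labellable H) :
    Labellable (G.boxProd H) := by
  obtain ⟨k, hk, ℓ, hℓ⟩ := G.labellable_iff.1 hG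
  obtain ⟨m, -, ℓ', hℓ'⟩ := H.labellable_iff.1 hH
  exact (G □ H).labellable_iff.2
    ⟨k + m, by omega, _, (hℓ.boxProd hℓ').map Equiv.natSumNatEquivNat.toEmbedding⟩

/-- If `G` and `H` are labellable finite simple graphs, then their Cartesian (box)
product `G □ H` is labellable. -/
theorem boxProd_labellable {V W : Type*} [Fintype V] [Fintype W]
    (G : SimpleGraph V) (H : SimpleGraph W)
    (hG : Labellable G) (hH : Labellable H) :
    Labellable (G.boxProd H) :=
  boxProd_labellable_general G H hG hH
end

section
/- For all integers m ≥ 2 and n ≥ 2 with (m,n) ≠ (2,2) and (m,n) ≠ (2,3), the fan graph F_{m,n} is not labellable. -/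
/-!
Under a labelling, adjacency is the Johnson relation `#(X ∩ Y) = k - 1` on `k`-sets. A common
neighbour `W` of an edge `X ~ Y` either contains `X ∩ Y` or lies in `X ∪ Y`, a set of size
`k + 1`, and two distinct labels of the same kind are adjacent. So an edge has at most two
pairwise non-adjacent common neighbours, which rules out `m ≥ 3`. For `m = 2` the two hubs
`a, b` over the path edge `p₀ p₁` are of opposite kinds, say `p₀ ∩ p₁ ⊆ a` and `b ⊆ p₀ ∪ p₁`;
counting then gives `#(w ∩ a) + #(w ∩ b) ≤ #(w ∩ p₀) + #(w ∩ p₁) + 1` for every `w`, which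
fails for `w = p₃`: it is adjacent to both hubs and to neither `p₀` nor `p₁`.
-/

open Finset

section Johnson

variable {α : Type*} [DecidableEq α] {k : ℕ} {X Y A B W : Finset α}

theorem card_inter_inter_add_card_inter_union (W X Y : Finset α) :
    #(W ∩ (X ∩ Y)) + #(W ∩ (X ∪ Y)) = #(W ∩ X) + #(W ∩ Y) := by
  rw [inter_union_distrib_left, inter_inter_distrib_left, card_inter_add_card_union]

theorem inter_subset_or_subset_union_of_card_inter (hW : #W = k) (hXY : #(X ∩ Y) = k - 1)
    (hWX : #(W ∩ X) = k - 1) (hWY : #(W ∩ Y) = k - 1) : X ∩ Y ⊆ W ∨ W ⊆ X ∪ Y := by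
  have hsum := card_inter_inter_add_card_inter_union W X Y
  have hle_inter : #(W ∩ (X ∩ Y)) ≤ #(X ∩ Y) := card_le_card inter_subset_right
  have hle_union : #(W ∩ (X ∪ Y)) ≤ #W := card_le_card inter_subset_left
  by_cases h : #(W ∩ (X ∩ Y)) = #(X ∩ Y)
  · exact .inl (inter_eq_right.mp (eq_of_subset_of_card_le inter_subset_right h.ge))
  · exact .inr (inter_eq_left.mp (eq_of_subset_of_card_le inter_subset_left (by omega)))

theorem card_add_card_le_card_inter_add_card_of_subset {T U V : Finset α} (hU : U ⊆ T)
    (hV : V ⊆ T) : #U + #V ≤ #(U ∩ V) + #T := by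
  rw [← card_inter_add_card_union]
  exact Nat.add_le_add_left (card_le_card (union_subset hU hV)) _

theorem card_inter_add_card_inter_le (hA : X ∩ Y ⊆ A) (hB : B ⊆ X ∪ Y)
    (hAcard : #A ≤ #(X ∩ Y) + 1) :
    #(W ∩ A) + #(W ∩ B) ≤ #(W ∩ X) + #(W ∩ Y) + 1 := by
  have hWA : #(W ∩ A) + #(X ∩ Y) ≤ #(W ∩ (X ∩ Y)) + #A := by
    have := card_add_card_le_card_inter_add_card_of_subset (inter_subset_right (s₁ := W)) hA
    rwa [inter_assoc, inter_eq_right.mpr hA] at this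
  have hWB : #(W ∩ B) ≤ #(W ∩ (X ∪ Y)) := card_le_card (inter_subset_inter_left hB)
  have hsplit := card_inter_inter_add_card_inter_union W X Y
  omega

end Johnson

structure IsLabelling {V : Type*} (G : SimpleGraph V) (k : ℕ) (ℓ : V → Finset ℕ) : Prop where
  injective : Function.Injective ℓ
  card_eq : ∀ v, #(ℓ v) = k
  adj_iff : ∀ u v, u ≠ v → (G.Adj u v ↔ #(ℓ u ∩ ℓ v) = k - 1)

theorem Labellable.exists_isLabelling {V : Type*} {G : SimpleGraph V} (hG : Labellable G) :
    ∃ k ℓ, IsLabelling G k ℓ :=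
  let ⟨k, _, ℓ, hinj, hcard, hadj⟩ := hG
  ⟨k, ℓ, hinj, hcard, hadj⟩

namespace IsLabelling

variable {V : Type*} {G : SimpleGraph V} {k : ℕ} {ℓ : V → Finset ℕ} {u v a b w w₁ w₂ w₃ : V}

theorem card_inter_of_adj (h : IsLabelling G k ℓ) (huv : G.Adj u v) : #(ℓ u ∩ ℓ v) = k - 1 :=
  (h.adj_iff u v huv.ne).mp huv

theorem adj_of_le_card_inter (h : IsLabelling G k ℓ) (huv : u ≠ v)
    (hle : k - 1 ≤ #(ℓ u ∩ ℓ v)) : G.Adj u v := by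
  refine (h.adj_iff u v huv).mpr (le_antisymm ?_ hle)
  by_contra! hlt
  have hu : ℓ u ∩ ℓ v = ℓ u :=
    eq_of_subset_of_card_le inter_subset_left (by rw [h.card_eq u]; omega)
  have hv : ℓ u ∩ ℓ v = ℓ v :=
    eq_of_subset_of_card_le inter_subset_right (by rw [h.card_eq v]; omega)
  exact huv (h.injective (hu.symm.trans hv))

theorem card_inter_lt_of_not_adj (h : IsLabelling G k ℓ) (huv : u ≠ v) (hnadj : ¬ G.Adj u v) :
    #(ℓ u ∩ ℓ v) < k - 1 :=
  lt_of_not_ge fun hle => hnadj (h.adj_of_le_card_inter huv hle)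

theorem inter_subset_or_subset_union (h : IsLabelling G k ℓ) (huv : G.Adj u v)
    (hwu : G.Adj w u) (hwv : G.Adj w v) : ℓ u ∩ ℓ v ⊆ ℓ w ∨ ℓ w ⊆ ℓ u ∪ ℓ v :=
  inter_subset_or_subset_union_of_card_inter (h.card_eq w) (h.card_inter_of_adj huv)
    (h.card_inter_of_adj hwu) (h.card_inter_of_adj hwv)

theorem adj_of_inter_subset (h : IsLabelling G k ℓ) (huv : G.Adj u v) (hab : a ≠ b)
    (ha : ℓ u ∩ ℓ v ⊆ ℓ a) (hb : ℓ u ∩ ℓ v ⊆ ℓ b) : G.Adj a b :=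
  h.adj_of_le_card_inter hab <|
    h.card_inter_of_adj huv ▸ card_le_card (subset_inter ha hb)

theorem adj_of_subset_union (h : IsLabelling G k ℓ) (huv : G.Adj u v) (hab : a ≠ b)
    (ha : ℓ a ⊆ ℓ u ∪ ℓ v) (hb : ℓ b ⊆ ℓ u ∪ ℓ v) : G.Adj a b := by
  refine h.adj_of_le_card_inter hab ?_
  have hcard := card_add_card_le_card_inter_add_card_of_subset ha hb
  have hunion := card_inter_add_card_union (ℓ u) (ℓ v)
  rw [h.card_eq, h.card_eq] at hcard hunion
  rw [h.card_inter_of_adj huv] at hunion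
  omega

theorem adj_of_three_common_neighbours (h : IsLabelling G k ℓ) (huv : G.Adj u v)
    (h₁u : G.Adj w₁ u) (h₁v : G.Adj w₁ v) (h₂u : G.Adj w₂ u) (h₂v : G.Adj w₂ v)
    (h₃u : G.Adj w₃ u) (h₃v : G.Adj w₃ v) (h₁₂ : w₁ ≠ w₂) (h₁₃ : w₁ ≠ w₃) (h₂₃ : w₂ ≠ w₃) :
    G.Adj w₁ w₂ ∨ G.Adj w₁ w₃ ∨ G.Adj w₂ w₃ := by
  rcases h.inter_subset_or_subset_union huv h₁u h₁v with s₁ | t₁ <;>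
    rcases h.inter_subset_or_subset_union huv h₂u h₂v with s₂ | t₂ <;>
    rcases h.inter_subset_or_subset_union huv h₃u h₃v with s₃ | t₃ <;>
    first
    | exact .inl (h.adj_of_inter_subset huv h₁₂ s₁ s₂)
    | exact .inl (h.adj_of_subset_union huv h₁₂ t₁ t₂)
    | exact .inr (.inl (h.adj_of_inter_subset huv h₁₃ s₁ s₃))
    | exact .inr (.inl (h.adj_of_subset_union huv h₁₃ t₁ t₃))
    | exact .inr (.inr (h.adj_of_inter_subset huv h₂₃ s₂ s₃))
    | exact .inr (.inr (h.adj_of_subset_union huv h₂₃ t₂ t₃))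

theorem adj_or_adj_of_common_neighbours (h : IsLabelling G k ℓ) (huv : G.Adj u v)
    (hau : G.Adj a u) (hav : G.Adj a v) (hbu : G.Adj b u) (hbv : G.Adj b v) (hab : a ≠ b)
    (hnab : ¬ G.Adj a b) (hwa : G.Adj w a) (hwb : G.Adj w b) (hwu : w ≠ u) (hwv : w ≠ v) :
    G.Adj w u ∨ G.Adj w v := by
  by_contra! ⟨hnwu, hnwv⟩
  have hwu' := h.card_inter_lt_of_not_adj hwu hnwu
  have hwv' := h.card_inter_lt_of_not_adj hwv hnwv
  have hAcard : ∀ x, #(ℓ x) ≤ #(ℓ u ∩ ℓ v) + 1 := by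
    intro x; rw [h.card_eq, h.card_inter_of_adj huv]; omega
  have mixed : ∀ {a b}, G.Adj w a → G.Adj w b → ℓ u ∩ ℓ v ⊆ ℓ a → ℓ b ⊆ ℓ u ∪ ℓ v → False := by
    intro a b hwa hwb ha hb
    have := card_inter_add_card_inter_le (W := ℓ w) ha hb (hAcard a)
    rw [h.card_inter_of_adj hwa, h.card_inter_of_adj hwb] at this
    omega
  rcases h.inter_subset_or_subset_union huv hau hav with ha | ha <;>
    rcases h.inter_subset_or_subset_union huv hbu hbv with hb | hb
  · exact hnab (h.adj_of_inter_subset huv hab ha hb)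
  · exact mixed hwa hwb ha hb
  · exact mixed hwb hwa hb ha
  · exact hnab (h.adj_of_subset_union huv hab ha hb)

end IsLabelling

section Fan

variable {m n : ℕ}

theorem fanGraph_adj_inl_inr (i : Fin m) (j : Fin n) :
    (fanGraph m n).Adj (.inl i) (.inr j) := by
  simp [fanGraph]

theorem fanGraph_adj_inr_inr {i j : Fin n} :
    (fanGraph m n).Adj (.inr i) (.inr j) ↔ i.val + 1 = j.val ∨ j.val + 1 = i.val := by
  grind [fanGraph, SimpleGraph.fromRel_adj]

theorem fanGraph_not_adj_inl_inl (i j : Fin m) : ¬ (fanGraph m n).Adj (.inl i) (.inl j) := by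
  simp [fanGraph]

end Fan

theorem not_labellable_fanGraph_of_three_le {m n : ℕ} (hm : 3 ≤ m) (hn : 2 ≤ n) :
    ¬ Labellable (fanGraph m n) := by
  intro hG
  obtain ⟨k, ℓ, h⟩ := hG.exists_isLabelling
  have hub (i : Fin m) (j : Fin n) := fanGraph_adj_inl_inr i j
  have hpath : (fanGraph m n).Adj (.inr ⟨0, by omega⟩) (.inr ⟨1, by omega⟩) :=
    fanGraph_adj_inr_inr.mpr (.inl rfl)
  have := h.adj_of_three_common_neighbours hpath (hub ⟨0, by omega⟩ _) (hub _ _)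
    (hub ⟨1, by omega⟩ _) (hub _ _) (hub ⟨2, by omega⟩ _) (hub _ _)
    (by simp) (by simp) (by simp)
  simp [fanGraph_not_adj_inl_inl] at this

theorem not_labellable_fanGraph_of_four_le {m n : ℕ} (hm : 2 ≤ m) (hn : 4 ≤ n) :
    ¬ Labellable (fanGraph m n) := by
  intro hG
  obtain ⟨k, ℓ, h⟩ := hG.exists_isLabelling
  have hub (i : Fin m) (j : Fin n) := fanGraph_adj_inl_inr i j
  have hpath : (fanGraph m n).Adj (.inr ⟨0, by omega⟩) (.inr ⟨1, by omega⟩) :=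
    fanGraph_adj_inr_inr.mpr (.inl rfl)
  have := h.adj_or_adj_of_common_neighbours hpath (hub ⟨0, by omega⟩ _) (hub _ _)
    (hub ⟨1, by omega⟩ _) (hub _ _) (by simp) (fanGraph_not_adj_inl_inl _ _)
    (hub _ ⟨3, by omega⟩).symm (hub _ _).symm (by simp) (by simp)
  simp [fanGraph_adj_inr_inr] at this

/-- For all integers `m ≥ 2` and `n ≥ 2` with `(m,n) ≠ (2,2)` and `(m,n) ≠ (2,3)`,
the fan graph `F_{m,n}` is not labellable. -/
theorem fan_not_labellable (m n : ℕ) (hm : 2 ≤ m) (hn : 2 ≤ n)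
    (h22 : (m, n) ≠ (2, 2)) (h23 : (m, n) ≠ (2, 3)) :
    ¬ Labellable (fanGraph m n) := by
  by_cases hm3 : 3 ≤ m
  · exact not_labellable_fanGraph_of_three_le hm3 hn
  · obtain rfl : m = 2 := by omega
    have hn4 : 4 ≤ n := by
      simp only [ne_eq, Prod.mk.injEq, true_and] at h22 h23
      omega
    exact not_labellable_fanGraph_of_four_le le_rfl hn4
end

section
/- If a, b, c are vertices of H with a adjacent to b, b adjacent to c, a ≠ c, and a not adjacent to c, then |ℓ(a) ∩ ℓ(c)| = k − 2, ℓ(a) ∩ ℓ(c) ⊆ ℓ(b), and ℓ(b) ⊆ ℓ(a) ∪ ℓ(c). -/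
/-!
Counting `ℓ b` through its intersections with `ℓ a` and `ℓ c` gives
`|A ∩ B| + |B ∩ C| = |A ∩ B ∩ C| + |B ∩ (A ∪ C)| ≤ |A ∩ C| + |B|`, so `|A ∩ C| ≥ k - 2`.
Since `A ≠ C` have the same size, `|A ∩ C| < k`, and non-adjacency excludes `k - 1`.
Hence `|A ∩ C| = k - 2`, the inequality is tight, and tightness of its two halves is
exactly `A ∩ C ⊆ B` and `B ⊆ A ∪ C`.
-/

open Finset

namespace Finset

variable {α : Type*} [DecidableEq α] {s t u : Finset α}

theorem card_inter_add_card_inter_eq (s t u : Finset α) :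
    #(s ∩ t) + #(t ∩ u) = #(s ∩ u ∩ t) + #(t ∩ (s ∪ u)) := by
  rw [← card_inter_add_card_union]
  congr 2 <;> ext x <;> simp only [mem_inter, mem_union] <;> tauto

theorem card_inter_add_card_inter_le (s t u : Finset α) :
    #(s ∩ t) + #(t ∩ u) ≤ #(s ∩ u) + #t := by
  rw [card_inter_add_card_inter_eq]
  exact Nat.add_le_add (card_le_card inter_subset_left) (card_le_card inter_subset_left)

theorem inter_subset_and_subset_union_of_card_inter_add_card_inter_eq
    (h : #(s ∩ t) + #(t ∩ u) = #(s ∩ u) + #t) : s ∩ u ⊆ t ∧ t ⊆ s ∪ u := by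
  rw [card_inter_add_card_inter_eq] at h
  have hsu : #(s ∩ u ∩ t) ≤ #(s ∩ u) := card_le_card inter_subset_left
  have ht : #(t ∩ (s ∪ u)) ≤ #t := card_le_card inter_subset_left
  exact ⟨inter_eq_left.1 (eq_of_subset_of_card_le inter_subset_left (by omega)),
    inter_eq_left.1 (eq_of_subset_of_card_le inter_subset_left (by omega))⟩

theorem card_inter_lt_of_card_eq_of_ne (hst : #s = #t) (hne : s ≠ t) : #(s ∩ t) < #s := by
  refine (card_le_card inter_subset_left).lt_of_ne fun h ↦ hne ?_
  have hst' : s ⊆ t := inter_eq_left.1 (eq_of_subset_of_card_le inter_subset_left h.ge)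
  exact eq_of_subset_of_card_le hst' hst.ge

end Finset

theorem path_labelling_general {V : Type*} (H : SimpleGraph V) (k : ℕ)
    (ℓ : V → Finset ℕ) (hinj : Function.Injective ℓ)
    (hcard : ∀ v, (ℓ v).card = k)
    (hadj : ∀ u v : V, u ≠ v → (H.Adj u v ↔ (ℓ u ∩ ℓ v).card = k - 1))
    (a b c : V) (hab : H.Adj a b) (hbc : H.Adj b c)
    (hac : a ≠ c) (hnac : ¬ H.Adj a c) :
    (ℓ a ∩ ℓ c).card = k - 2 ∧ ℓ a ∩ ℓ c ⊆ ℓ b ∧ ℓ b ⊆ ℓ a ∪ ℓ c := by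
  have hAB : #(ℓ a ∩ ℓ b) = k - 1 := (hadj a b hab.ne).1 hab
  have hBC : #(ℓ b ∩ ℓ c) = k - 1 := (hadj b c hbc.ne).1 hbc
  have hAC_ne : #(ℓ a ∩ ℓ c) ≠ k - 1 := fun h ↦ hnac ((hadj a c hac).2 h)
  have hAC_lt : #(ℓ a ∩ ℓ c) < k :=
    hcard a ▸ card_inter_lt_of_card_eq_of_ne (by rw [hcard, hcard]) (hinj.ne hac)
  have hcount := card_inter_add_card_inter_le (ℓ a) (ℓ b) (ℓ c)
  rw [hAB, hBC, hcard] at hcount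
  have hAC : #(ℓ a ∩ ℓ c) = k - 2 := by omega
  refine ⟨hAC, inter_subset_and_subset_union_of_card_inter_add_card_inter_eq ?_⟩
  rw [hAB, hBC, hAC, hcard]
  omega

/-- Let `H` be a simple graph, `k` a positive integer, and `ℓ` an injective
function assigning to each vertex of `H` a `k`-element subset of `ℕ`, such that
two distinct vertices `u` and `v` are adjacent in `H` if and only if
`|ℓ(u) ∩ ℓ(v)| = k - 1`. If `a, b, c` are vertices of `H` with `a` adjacent to
`b`, `b` adjacent to `c`, `a ≠ c`, and `a` not adjacent to `c`, then
`|ℓ(a) ∩ ℓ(c)| = k - 2`, `ℓ(a) ∩ ℓ(c) ⊆ ℓ(b)`, and `ℓ(b) ⊆ ℓ(a) ∪ ℓ(c)`. -/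
theorem path_labelling {V : Type*} (H : SimpleGraph V) (k : ℕ) (hk : 0 < k)
    (ℓ : V → Finset ℕ) (hinj : Function.Injective ℓ)
    (hcard : ∀ v, (ℓ v).card = k)
    (hadj : ∀ u v : V, u ≠ v → (H.Adj u v ↔ (ℓ u ∩ ℓ v).card = k - 1))
    (a b c : V) (hab : H.Adj a b) (hbc : H.Adj b c)
    (hac : a ≠ c) (hnac : ¬ H.Adj a c) :
    (ℓ a ∩ ℓ c).card = k - 2 ∧ ℓ a ∩ ℓ c ⊆ ℓ b ∧ ℓ b ⊆ ℓ a ∪ ℓ c :=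
  path_labelling_general H k ℓ hinj hcard hadj a b c hab hbc hac hnac
end

section
/- If a, b, c, d are four distinct vertices of H such that a is adjacent to both b and c, d is adjacent to both b and c, b is adjacent to c, and a is not adjacent to d (so that {a,b,c,d} induces K_4 minus an edge), then exactly one of the two triangles has triple label intersection of size k − 1; that is, |ℓ(a) ∩ ℓ(b) ∩ ℓ(c)| = k − 1 if and only if |ℓ(b) ∩ ℓ(c) ∩ ℓ(d)| ≠ k − 1. -/
/-!
Put `s = ℓ b ∩ ℓ c` and `u = ℓ b ∪ ℓ c`, of sizes `k - 1` and `k + 1`. For `x ∈ {a, d}`,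
inclusion–exclusion gives `|ℓ x ∩ s| + |ℓ x ∩ u| = 2(k - 1)`, so either `s ⊆ ℓ x` (triple
intersection `k - 1`) or `ℓ x ⊆ u`. If `s ⊆ ℓ a ∩ ℓ d`, or if `ℓ a ∪ ℓ d ⊆ u`, then
`|ℓ a ∩ ℓ d| ≥ k - 1`; as `ℓ a ≠ ℓ d` are both `k`-sets, this forces `|ℓ a ∩ ℓ d| = k - 1`,
making `a` and `d` adjacent.
-/

namespace Finset

variable {α : Type*} [DecidableEq α]

theorem card_inter_lt_of_ne {s t : Finset α} (hst : s ≠ t) (hcard : #s = #t) :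
    #(s ∩ t) < #s := by
  refine (card_le_card inter_subset_left).lt_of_ne fun h => hst ?_
  have hsub : s ⊆ t := inter_eq_left.mp (eq_of_subset_of_card_le inter_subset_left h.ge)
  exact eq_of_subset_of_card_le hsub hcard.ge

theorem card_inter_inter_add_card_inter_union (x s t : Finset α) :
    #(x ∩ (s ∩ t)) + #(x ∩ (s ∪ t)) = #(x ∩ s) + #(x ∩ t) := by
  rw [inter_inter_distrib_left, inter_union_distrib_left, add_comm]
  exact card_union_add_card_inter _ _

theorem card_inter_le_card_inter_of_union_subset {s t u v : Finset α} (h : s ∪ t ⊆ u ∪ v)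
    (hcard : #u + #v ≤ #s + #t) : #(u ∩ v) ≤ #(s ∩ t) := by
  have hst := card_union_add_card_inter s t
  have huv := card_union_add_card_inter u v
  have := card_le_card h
  omega

theorem card_inter_eq_card_iff_subset {x s : Finset α} : #(x ∩ s) = #s ↔ s ⊆ x := by
  rw [← inter_eq_right, ← eq_iff_card_le_of_subset inter_subset_right]
  exact ⟨ge_of_eq, (card_le_card inter_subset_right).antisymm⟩

theorem subset_union_of_card_inter_inter_ne {x b c : Finset α} {k : ℕ} (hx : #x = k)
    (hxb : #(x ∩ b) = k - 1) (hxc : #(x ∩ c) = k - 1) (hbc : #(b ∩ c) = k - 1)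
    (h : #(x ∩ (b ∩ c)) ≠ k - 1) : x ⊆ b ∪ c := by
  have hsum := card_inter_inter_add_card_inter_union x b c
  have hle : #(x ∩ (b ∩ c)) ≤ k - 1 := hbc ▸ card_le_card inter_subset_right
  have hunion : #x ≤ #(x ∩ (b ∪ c)) := by omega
  exact inter_eq_left.mp (eq_of_subset_of_card_le inter_subset_left hunion)

end Finset

open Finset

theorem K4_minus_e_labelling_general {V : Type*} (H : SimpleGraph V) (k : ℕ)
    (ℓ : V → Finset ℕ) (hinj : Function.Injective ℓ)
    (hcard : ∀ v, (ℓ v).card = k)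
    (hadj : ∀ u v : V, u ≠ v → (H.Adj u v ↔ (ℓ u ∩ ℓ v).card = k - 1))
    (a b c d : V)
    (hab : a ≠ b) (hac : a ≠ c) (had : a ≠ d) (hbc : b ≠ c) (hbd : b ≠ d)
    (hcd : c ≠ d)
    (hAab : H.Adj a b) (hAac : H.Adj a c) (hAdb : H.Adj d b) (hAdc : H.Adj d c)
    (hAbc : H.Adj b c) (hnad : ¬ H.Adj a d) :
    ((ℓ a ∩ ℓ b ∩ ℓ c).card = k - 1 ↔ ¬ (ℓ b ∩ ℓ c ∩ ℓ d).card = k - 1) := by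
  have cab := (hadj a b hab).mp hAab
  have cac := (hadj a c hac).mp hAac
  have cdb := (hadj d b hbd.symm).mp hAdb
  have cdc := (hadj d c hcd.symm).mp hAdc
  have cbc := (hadj b c hbc).mp hAbc
  have hlt : #(ℓ a ∩ ℓ d) < k :=
    hcard a ▸ card_inter_lt_of_ne (hinj.ne had) ((hcard a).trans (hcard d).symm)
  have hfar : ¬ #(ℓ b ∩ ℓ c) ≤ #(ℓ a ∩ ℓ d) := fun h => hnad ((hadj a d had).mpr (by omega))
  rw [inter_assoc, inter_comm _ (ℓ d)]
  constructor
  · intro ha hd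
    rw [← cbc, card_inter_eq_card_iff_subset] at ha hd
    exact hfar (card_le_card (subset_inter ha hd))
  · intro hd
    by_contra ha
    have hA := subset_union_of_card_inter_inter_ne (hcard a) cab cac cbc ha
    have hD := subset_union_of_card_inter_inter_ne (hcard d) cdb cdc cbc hd
    exact hfar (card_inter_le_card_inter_of_union_subset (union_subset hA hD)
      (by rw [hcard, hcard, hcard, hcard]))

/-- Let `H` be a simple graph, `k` a positive integer, and `ℓ` an injective
function assigning to each vertex of `H` a `k`-element subset of `ℕ`, such that
two distinct vertices `u` and `v` are adjacent in `H` if and only if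
`|ℓ(u) ∩ ℓ(v)| = k - 1`. If `a, b, c, d` are four distinct vertices of `H` such
that `a` is adjacent to both `b` and `c`, `d` is adjacent to both `b` and `c`,
`b` is adjacent to `c`, and `a` is not adjacent to `d` (so that `{a,b,c,d}`
induces `K₄` minus an edge), then exactly one of the two triangles has triple
label intersection of size `k - 1`. -/
theorem K4_minus_e_labelling {V : Type*} (H : SimpleGraph V) (k : ℕ) (hk : 0 < k)
    (ℓ : V → Finset ℕ) (hinj : Function.Injective ℓ)
    (hcard : ∀ v, (ℓ v).card = k)
    (hadj : ∀ u v : V, u ≠ v → (H.Adj u v ↔ (ℓ u ∩ ℓ v).card = k - 1))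
    (a b c d : V)
    (hab : a ≠ b) (hac : a ≠ c) (had : a ≠ d) (hbc : b ≠ c) (hbd : b ≠ d)
    (hcd : c ≠ d)
    (hAab : H.Adj a b) (hAac : H.Adj a c) (hAdb : H.Adj d b) (hAdc : H.Adj d c)
    (hAbc : H.Adj b c) (hnad : ¬ H.Adj a d) :
    ((ℓ a ∩ ℓ b ∩ ℓ c).card = k - 1 ↔ ¬ (ℓ b ∩ ℓ c ∩ ℓ d).card = k - 1) :=
  K4_minus_e_labelling_general H k ℓ hinj hcard hadj a b c d hab hac had hbc hbd hcd hAab hAac hAdb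
    hAdc hAbc hnad
end

section
/- If c, x, y, z are four distinct vertices of H such that c is adjacent to each of x, y, z and x, y, z are pairwise nonadjacent (so that {c,x,y,z} induces K_{1,3}), then k ≥ 3 and there exist a finite set X ⊆ ℕ with |X| = k − 3 and pairwise distinct elements e₁, e₂, e₃, e₄, e₅, e₆ of ℕ, none belonging to X, such that ℓ(c) = X ∪ {e₁,e₂,e₃}, ℓ(x) = X ∪ {e₂,e₃,e₄}, ℓ(y) = X ∪ {e₁,e₃,e₅}, and ℓ(z) = X ∪ {e₁,e₂,e₆}. -/
/-!
Every neighbour `v` of `c` has label `insert dᵥ ((ℓ c).erase aᵥ)` with `aᵥ ∈ ℓ c`, `dᵥ ∉ ℓ c`.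
Two such labels with the same removed element meet in `(ℓ c).erase a`, and two with the same
added element meet in `insert d (((ℓ c).erase a).erase a')`; both have `k - 1` elements, so
nonadjacent neighbours differ in both the removed and the added element. The leaves `x, y, z`
therefore remove three distinct elements `e₁, e₂, e₃` of `ℓ c` and add three distinct new ones,
and `X = ℓ c \ {e₁, e₂, e₃}`.
-/

namespace Finset

variable {α : Type*} [DecidableEq α] {A B : Finset α} {a a' d d' : α} {k : ℕ}

theorem exists_eq_insert_erase_of_card_inter (hA : #A = k) (hB : #B = k) (hk : 0 < k)
    (hAB : #(A ∩ B) = k - 1) : ∃ a ∈ A, ∃ d ∉ A, B = insert d (A.erase a) := by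
  obtain ⟨a, ha⟩ : ∃ a, A \ B = {a} := card_eq_one.mp (by rw [card_sdiff, inter_comm]; omega)
  obtain ⟨d, hd⟩ : ∃ d, B \ A = {d} := card_eq_one.mp (by rw [card_sdiff]; omega)
  have haA : a ∈ A := (mem_sdiff.mp (ha ▸ mem_singleton_self a)).1
  have hdA : d ∉ A := (mem_sdiff.mp (hd ▸ mem_singleton_self d)).2
  refine ⟨a, haA, d, hdA, ?_⟩
  calc B = B \ A ∪ B ∩ A := (sdiff_union_inter B A).symm
    _ = insert d (A \ (A \ B)) := by rw [hd, sdiff_sdiff_right_self, inf_eq_inter, inter_comm]; rfl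
    _ = insert d (A.erase a) := by rw [ha, erase_eq]

theorem insert_erase_inter_insert_erase_of_ne (hd : d ∉ A) (hd' : d' ∉ A) (hdd' : d ≠ d') :
    insert d (A.erase a) ∩ insert d' (A.erase a) = A.erase a := by
  grind

theorem card_insert_erase_inter_insert_erase (ha : a ∈ A) (ha' : a' ∈ A) (haa' : a ≠ a')
    (hd : d ∉ A) : #(insert d (A.erase a) ∩ insert d (A.erase a')) = #A - 1 := by
  have h2 : 2 ≤ #A := one_lt_card.mpr ⟨a, ha, a', ha', haa'⟩
  rw [← insert_inter_distrib, erase_inter, inter_erase, inter_self,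
    card_insert_of_notMem (by grind), card_erase_of_mem (by grind), card_erase_of_mem ha']
  omega

theorem insert_erase_union_insert (X : Finset α) {b c : α} (haX : a ∉ X) (hab : a ≠ b)
    (hac : a ≠ c) :
    insert d ((X ∪ {a, b, c}).erase a) = X ∪ {b, c, d} := by
  grind

theorem ne_and_ne_of_eq_insert_erase {B B' : Finset α} (ha : a ∈ A) (ha' : a' ∈ A)
    (hd : d ∉ A) (hd' : d' ∉ A) (hB : B = insert d (A.erase a))
    (hB' : B' = insert d' (A.erase a')) (hne : B ≠ B') (hcard : #(B ∩ B') ≠ #A - 1) :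
    a ≠ a' ∧ d ≠ d' := by
  subst hB hB'
  have haa' : a ≠ a' := by
    rintro rfl
    have hdd' : d ≠ d' := by rintro rfl; exact hne rfl
    exact hcard (by rw [insert_erase_inter_insert_erase_of_ne hd hd' hdd', card_erase_of_mem ha])
  refine ⟨haa', ?_⟩
  rintro rfl
  exact hcard (card_insert_erase_inter_insert_erase ha ha' haa' hd)

theorem exists_eq_union_of_three_swaps {a₁ a₂ a₃ d₁ d₂ d₃ : α}
    (ha₁ : a₁ ∈ A) (ha₂ : a₂ ∈ A) (ha₃ : a₃ ∈ A) (hd₁ : d₁ ∉ A) (hd₂ : d₂ ∉ A) (hd₃ : d₃ ∉ A)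
    (ha₁₂ : a₁ ≠ a₂) (ha₁₃ : a₁ ≠ a₃) (ha₂₃ : a₂ ≠ a₃)
    (hd₁₂ : d₁ ≠ d₂) (hd₁₃ : d₁ ≠ d₃) (hd₂₃ : d₂ ≠ d₃) :
    3 ≤ #A ∧ ∃ X : Finset α, #X = #A - 3 ∧
      [a₁, a₂, a₃, d₁, d₂, d₃].Pairwise (· ≠ ·) ∧
      (∀ e ∈ [a₁, a₂, a₃, d₁, d₂, d₃], e ∉ X) ∧
      A = X ∪ {a₁, a₂, a₃} ∧
      insert d₁ (A.erase a₁) = X ∪ {a₂, a₃, d₁} ∧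
      insert d₂ (A.erase a₂) = X ∪ {a₁, a₃, d₂} ∧
      insert d₃ (A.erase a₃) = X ∪ {a₁, a₂, d₃} := by
  have hsub : {a₁, a₂, a₃} ⊆ A := by grind
  have htriple : #{a₁, a₂, a₃} = 3 := card_eq_three.mpr ⟨a₁, a₂, a₃, ha₁₂, ha₁₃, ha₂₃, rfl⟩
  set X := A \ {a₁, a₂, a₃}
  have hA : A = X ∪ {a₁, a₂, a₃} := (sdiff_union_of_subset hsub).symm
  have haX {a : α} (ha : a ∈ ({a₁, a₂, a₃} : Finset α)) : a ∉ X := fun h => (mem_sdiff.mp h).2 ha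
  refine ⟨htriple ▸ card_le_card hsub, X, by rw [card_sdiff_of_subset hsub, htriple], ?_, ?_, hA,
    ?_, ?_, ?_⟩
  · simp only [List.pairwise_cons, List.mem_cons, List.not_mem_nil, or_false, forall_eq_or_imp,
      forall_eq]
    grind
  · simp only [List.mem_cons, List.not_mem_nil, or_false, forall_eq_or_imp, forall_eq]
    grind
  · rw [hA]
    exact insert_erase_union_insert X (haX (by simp)) ha₁₂ ha₁₃
  · rw [hA, insert_comm a₁ a₂]
    exact insert_erase_union_insert X (haX (by simp)) ha₁₂.symm ha₂₃
  · rw [hA, pair_comm a₂ a₃, insert_comm a₁ a₃]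
    exact insert_erase_union_insert X (haX (by simp)) ha₁₃.symm ha₂₃.symm

end Finset

open Finset

theorem claw_labelling_general {V : Type*} (H : SimpleGraph V) (k : ℕ) (hk : 0 < k)
    (ℓ : V → Finset ℕ) (hinj : Function.Injective ℓ)
    (hcard : ∀ v, (ℓ v).card = k)
    (hadj : ∀ u v : V, u ≠ v → (H.Adj u v ↔ (ℓ u ∩ ℓ v).card = k - 1))
    (c x y z : V)
    (hxy : x ≠ y) (hxz : x ≠ z) (hyz : y ≠ z)
    (hAcx : H.Adj c x) (hAcy : H.Adj c y) (hAcz : H.Adj c z)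
    (hnxy : ¬ H.Adj x y) (hnxz : ¬ H.Adj x z) (hnyz : ¬ H.Adj y z) :
    3 ≤ k ∧
      ∃ X : Finset ℕ, X.card = k - 3 ∧
        ∃ e₁ e₂ e₃ e₄ e₅ e₆ : ℕ,
          ([e₁, e₂, e₃, e₄, e₅, e₆] : List ℕ).Pairwise (· ≠ ·) ∧
          (∀ e ∈ ([e₁, e₂, e₃, e₄, e₅, e₆] : List ℕ), e ∉ X) ∧
          ℓ c = X ∪ {e₁, e₂, e₃} ∧
          ℓ x = X ∪ {e₂, e₃, e₄} ∧
          ℓ y = X ∪ {e₁, e₃, e₅} ∧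
          ℓ z = X ∪ {e₁, e₂, e₆} := by
  have hnbr (v : V) (h : H.Adj c v) : ∃ a ∈ ℓ c, ∃ d ∉ ℓ c, ℓ v = insert d ((ℓ c).erase a) :=
    exists_eq_insert_erase_of_card_inter (hcard c) (hcard v) hk ((hadj c v h.ne).mp h)
  have hnonadj (u v : V) (huv : u ≠ v) (h : ¬ H.Adj u v) : #(ℓ u ∩ ℓ v) ≠ #(ℓ c) - 1 := by
    rw [hcard c]; exact mt (hadj u v huv).mpr h
  obtain ⟨a₁, ha₁, d₁, hd₁, hx⟩ := hnbr x hAcx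
  obtain ⟨a₂, ha₂, d₂, hd₂, hy⟩ := hnbr y hAcy
  obtain ⟨a₃, ha₃, d₃, hd₃, hz⟩ := hnbr z hAcz
  obtain ⟨ha₁₂, hd₁₂⟩ := ne_and_ne_of_eq_insert_erase ha₁ ha₂ hd₁ hd₂ hx hy
    (hinj.ne hxy) (hnonadj x y hxy hnxy)
  obtain ⟨ha₁₃, hd₁₃⟩ := ne_and_ne_of_eq_insert_erase ha₁ ha₃ hd₁ hd₃ hx hz
    (hinj.ne hxz) (hnonadj x z hxz hnxz)
  obtain ⟨ha₂₃, hd₂₃⟩ := ne_and_ne_of_eq_insert_erase ha₂ ha₃ hd₂ hd₃ hy hz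
    (hinj.ne hyz) (hnonadj y z hyz hnyz)
  obtain ⟨hk₃, X, hX, hdistinct, hnotin, hc, hx', hy', hz'⟩ :=
    exists_eq_union_of_three_swaps ha₁ ha₂ ha₃ hd₁ hd₂ hd₃ ha₁₂ ha₁₃ ha₂₃ hd₁₂ hd₁₃ hd₂₃
  rw [hcard c] at hk₃ hX
  exact ⟨hk₃, X, hX, a₁, a₂, a₃, d₁, d₂, d₃, hdistinct, hnotin, hc, hx ▸ hx', hy ▸ hy', hz ▸ hz'⟩

/-- Let `H` be a simple graph, `k` a positive integer, and `ℓ` an injective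
function assigning to each vertex of `H` a `k`-element subset of `ℕ`, such that
two distinct vertices `u` and `v` are adjacent in `H` if and only if
`|ℓ(u) ∩ ℓ(v)| = k - 1`. If `c, x, y, z` are four distinct vertices of `H` such
that `c` is adjacent to each of `x, y, z` and `x, y, z` are pairwise nonadjacent
(so that `{c,x,y,z}` induces `K_{1,3}`), then `k ≥ 3` and there exist a finite
set `X ⊆ ℕ` with `|X| = k - 3` and pairwise distinct elements
`e₁, e₂, e₃, e₄, e₅, e₆` of `ℕ`, none belonging to `X`, such that
`ℓ(c) = X ∪ {e₁,e₂,e₃}`, `ℓ(x) = X ∪ {e₂,e₃,e₄}`, `ℓ(y) = X ∪ {e₁,e₃,e₅}`, and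
`ℓ(z) = X ∪ {e₁,e₂,e₆}`. -/
theorem claw_labelling {V : Type*} (H : SimpleGraph V) (k : ℕ) (hk : 0 < k)
    (ℓ : V → Finset ℕ) (hinj : Function.Injective ℓ)
    (hcard : ∀ v, (ℓ v).card = k)
    (hadj : ∀ u v : V, u ≠ v → (H.Adj u v ↔ (ℓ u ∩ ℓ v).card = k - 1))
    (c x y z : V)
    (hcx : c ≠ x) (hcy : c ≠ y) (hcz : c ≠ z) (hxy : x ≠ y) (hxz : x ≠ z)
    (hyz : y ≠ z)
    (hAcx : H.Adj c x) (hAcy : H.Adj c y) (hAcz : H.Adj c z)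
    (hnxy : ¬ H.Adj x y) (hnxz : ¬ H.Adj x z) (hnyz : ¬ H.Adj y z) :
    3 ≤ k ∧
      ∃ X : Finset ℕ, X.card = k - 3 ∧
        ∃ e₁ e₂ e₃ e₄ e₅ e₆ : ℕ,
          ([e₁, e₂, e₃, e₄, e₅, e₆] : List ℕ).Pairwise (· ≠ ·) ∧
          (∀ e ∈ ([e₁, e₂, e₃, e₄, e₅, e₆] : List ℕ), e ∉ X) ∧
          ℓ c = X ∪ {e₁, e₂, e₃} ∧
          ℓ x = X ∪ {e₂, e₃, e₄} ∧
          ℓ y = X ∪ {e₁, e₃, e₅} ∧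
          ℓ z = X ∪ {e₁, e₂, e₆} :=
  claw_labelling_general H k hk ℓ hinj hcard hadj c x y z hxy hxz hyz hAcx hAcy hAcz hnxy hnxz hnyz
end

section
/- The 6-vertex graph with vertex set {1,2,3,4,5,6} and edge set {{4,5},{5,6},{4,6},{1,4},{1,2},{2,5},{1,3},{3,6}} (that is, a triangle on {4,5,6}, with vertex 1 adjacent to vertex 4, vertex 2 adjacent to vertices 1 and 5, and vertex 3 adjacent to vertices 1 and 6) is minimally unlabellable: it is not labellable, but every proper induced subgraph of it is labellable. -/
/-- The 6-vertex graph with vertex set `{1,…,6}` (vertex `i` is encoded as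
`i - 1 : Fin 6`) and edge set
`{{4,5},{5,6},{4,6},{1,4},{1,2},{2,5},{1,3},{3,6}}`: a triangle on `{4,5,6}`,
with vertex `1` adjacent to vertex `4`, vertex `2` adjacent to vertices `1` and
`5`, and vertex `3` adjacent to vertices `1` and `6`. -/
def triangleWithThreePendantPaths : SimpleGraph (Fin 6) :=
  SimpleGraph.fromRel (fun a b =>
    (a.val + 1, b.val + 1) ∈
      [(4, 5), (5, 6), (4, 6), (1, 4), (1, 2), (2, 5), (1, 3), (3, 6)])

open Finset
open scoped symmDiff

namespace Finset

variable {α : Type*} [DecidableEq α]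

theorem card_symmDiff_of_card_eq {k : ℕ} {s t : Finset α} (hs : #s = k) (ht : #t = k) :
    #(s ∆ t) = 2 * (k - #(s ∩ t)) := by
  rw [Finset.symmDiff_def, card_union_of_disjoint disjoint_sdiff_sdiff]
  have hst := card_sdiff_add_card_inter s t
  have hts := card_sdiff_add_card_inter t s
  rw [inter_comm] at hts
  omega

theorem symmDiff_eq_union_of_card_add_card_le {s t : Finset α} (h : #s + #t ≤ #(s ∆ t)) :
    s ∆ t = s ∪ t :=
  eq_of_subset_of_card_le symmDiff_subset_union ((card_union_le s t).trans h)

theorem symmDiff_symmDiff_symmDiff_cancel_left (s t u : Finset α) :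
    s ∆ t ∆ (s ∆ u) = t ∆ u := by
  rw [symmDiff_symmDiff_symmDiff_comm, symmDiff_self, bot_symmDiff]

theorem symmDiff_eq_of_card_symmDiff_square {p c d q : Finset α}
    (hpc : #(p ∆ c) = 2) (hcd : #(c ∆ d) = 2) (hpq : #(p ∆ q) = 2) (hqd : #(q ∆ d) = 2)
    (hpd : 4 ≤ #(p ∆ d)) (hcq : 4 ≤ #(c ∆ q)) :
    c ∆ q = p ∆ d := by
  have hcorner {x : Finset α} (hpx : #(p ∆ x) = 2) (hxd : #(x ∆ d) = 2) : p ∆ x ⊆ p ∆ d := by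
    have h := symmDiff_symmDiff_symmDiff_cancel_left x p d
    rw [symmDiff_comm x p] at h
    rw [← h] at hpd ⊢
    rw [symmDiff_eq_union_of_card_add_card_le (s := p ∆ x) (by omega)]
    exact subset_union_left
  have hsub : c ∆ q ⊆ p ∆ d := by
    rw [← symmDiff_symmDiff_symmDiff_cancel_left p c q] at hcq ⊢
    rw [symmDiff_eq_union_of_card_add_card_le (s := p ∆ c) (by omega)]
    exact union_subset (hcorner hpc hcd) (hcorner hpq hqd)
  refine eq_of_subset_of_card_le hsub ?_
  calc #(p ∆ d) ≤ #(p ∆ c ∪ c ∆ d) := card_le_card (symmDiff_triangle p c d)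
    _ ≤ #(p ∆ c) + #(c ∆ d) := card_union_le _ _
    _ ≤ #(c ∆ q) := by omega

end Finset

theorem Labellable.exists_card_symmDiff {V : Type*} {H : SimpleGraph V} (hH : Labellable H) :
    ∃ ℓ : V → Finset ℕ, ∀ u v, u ≠ v →
      (H.Adj u v → #(ℓ u ∆ ℓ v) = 2) ∧ (¬ H.Adj u v → 4 ≤ #(ℓ u ∆ ℓ v)) := by
  obtain ⟨k, hk, ℓ, hinj, hcard, hadj⟩ := hH
  refine ⟨ℓ, fun u v huv => ?_⟩
  have hdist := card_symmDiff_of_card_eq (hcard u) (hcard v)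
  have hinter : #(ℓ u ∩ ℓ v) ≤ k := (hcard u) ▸ card_le_card inter_subset_left
  have hpos : 0 < #(ℓ u ∆ ℓ v) := (symmDiff_nonempty.mpr (hinj.ne huv)).card_pos
  rw [hadj u v huv]
  constructor <;> intro <;> omega

theorem labellable_induce_of_notMem {V : Type*} {H : SimpleGraph V} {s : Set V} {v : V}
    (hv : v ∉ s) {k : ℕ} (hk : 0 < k) (ℓ : V → Finset ℕ) (hcard : ∀ a, a ≠ v → #(ℓ a) = k)
    (hℓ : ∀ a b, a ≠ v → b ≠ v → a ≠ b →
      ℓ a ≠ ℓ b ∧ (H.Adj a b ↔ #(ℓ a ∩ ℓ b) = k - 1)) :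
    Labellable (H.induce s) := by
  have hne (a : s) : (a : V) ≠ v := fun h => hv (h ▸ a.2)
  refine ⟨k, hk, fun a => ℓ a, fun a b hab => ?_, fun a => hcard a (hne a), fun a b hab => ?_⟩
  · by_contra h
    exact (hℓ a b (hne a) (hne b) (Subtype.coe_ne_coe.mpr h)).1 hab
  · exact (hℓ a b (hne a) (hne b) (Subtype.coe_ne_coe.mpr hab)).2

instance : DecidableRel triangleWithThreePendantPaths.Adj := fun a b =>
  decidable_of_iff _ (SimpleGraph.fromRel_adj _ a b).symm

theorem triangleWithThreePendantPaths_not_labellable :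
    ¬ Labellable triangleWithThreePendantPaths := by
  intro hH
  obtain ⟨ℓ, hℓ⟩ := hH.exists_card_symmDiff
  have adj (u v : Fin 6) (h : triangleWithThreePendantPaths.Adj u v) :=
    (hℓ u v h.ne).1 h
  have nonadj (u v : Fin 6) (huv : u ≠ v) (h : ¬ triangleWithThreePendantPaths.Adj u v) :=
    (hℓ u v huv).2 h
  have h2 := symmDiff_eq_of_card_symmDiff_square (adj 0 3 (by decide)) (adj 3 4 (by decide))
    (adj 0 1 (by decide)) (adj 1 4 (by decide)) (nonadj 0 4 (by decide) (by decide))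
    (nonadj 3 1 (by decide) (by decide))
  have h3 := symmDiff_eq_of_card_symmDiff_square (adj 0 3 (by decide)) (adj 3 5 (by decide))
    (adj 0 2 (by decide)) (adj 2 5 (by decide)) (nonadj 0 5 (by decide) (by decide))
    (nonadj 3 2 (by decide) (by decide))
  have h23 : ℓ 1 ∆ ℓ 2 = ℓ 4 ∆ ℓ 5 := by
    rw [← symmDiff_symmDiff_symmDiff_cancel_left (ℓ 3), h2, h3,
      symmDiff_symmDiff_symmDiff_cancel_left]
  have := nonadj 1 2 (by decide) (by decide)
  rw [h23, adj 4 5 (by decide)] at this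
  omega

theorem triangleWithThreePendantPaths_induce_labellable {s : Set (Fin 6)} {v : Fin 6}
    (hv : v ∉ s) : Labellable (triangleWithThreePendantPaths.induce s) := by
  fin_cases v
  · exact labellable_induce_of_notMem hv (k := 3) (by norm_num)
      ![∅, {1,4,6}, {2,5,7}, {1,2,3}, {1,2,4}, {1,2,5}] (by decide) (by decide)
  · exact labellable_induce_of_notMem hv (k := 3) (by norm_num)
      ![{1,3,6}, ∅, {1,5,6}, {1,2,3}, {1,2,4}, {1,2,5}] (by decide) (by decide)
  · exact labellable_induce_of_notMem hv (k := 3) (by norm_num)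
      ![{1,3,6}, {1,4,6}, ∅, {1,2,3}, {1,2,4}, {1,2,5}] (by decide) (by decide)
  · exact labellable_induce_of_notMem hv (k := 2) (by norm_num)
      ![{1,2}, {2,3}, {1,5}, ∅, {3,4}, {4,5}] (by decide) (by decide)
  · exact labellable_induce_of_notMem hv (k := 3) (by norm_num)
      ![{0,1,2}, {1,2,5}, {0,1,4}, {0,2,3}, ∅, {0,3,4}] (by decide) (by decide)
  · exact labellable_induce_of_notMem hv (k := 3) (by norm_num)
      ![{0,1,2}, {0,1,4}, {1,2,5}, {0,2,3}, {0,3,4}, ∅] (by decide) (by decide)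

/-- This 6-vertex graph is minimally unlabellable: it is not labellable, but
every proper induced subgraph of it is labellable. -/
theorem triangleWithThreePendantPaths_minimally_unlabellable :
    ¬ Labellable triangleWithThreePendantPaths ∧
      ∀ s : Set (Fin 6), s ≠ Set.univ →
        Labellable (triangleWithThreePendantPaths.induce s) := by
  refine ⟨triangleWithThreePendantPaths_not_labellable, fun s hs => ?_⟩
  obtain ⟨v, hv⟩ := Set.ne_univ_iff_exists_notMem s |>.mp hs
  exact triangleWithThreePendantPaths_induce_labellable hv
end
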